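/- arXiv:2008.09732 — 6 statements merged into one kernel-verified Lean document; each statement's English description precedes it below -/
import Mathlib

section
/- For constrained zonotopes Z = CZ(G_z, c_z, A_z, b_z) ⊆ ℝ^n and W = CZ(G_w, c_w, A_w, b_w) ⊆ ℝ^n, the Minkowski sum Z ⊕ W = {z + w : z ∈ Z, w ∈ W} is exactly the constrained zonotope CZ([G_z G_w], c_z + c_w, blkdiag(A_z, A_w), (b_z, b_w)), where [G_z G_w] is the horizontal concatenation of the generator matrices and blkdiag denotes block-diagonal concatenation. -/
open Matrix

/-- A constrained zonotope `CZ(G, c, A, b) = {c + Gξ : ‖ξ‖_∞ ≤ 1, Aξ = b}`. -/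
def CZ {V ι κ : Type*} [Fintype ι] (G : Matrix V ι ℝ) (c : V → ℝ)
    (A : Matrix κ ι ℝ) (b : κ → ℝ) : Set (V → ℝ) :=
  {x | ∃ ξ : ι → ℝ, ‖ξ‖ ≤ 1 ∧ A.mulVec ξ = b ∧ x = c + G.mulVec ξ}

/-- Minkowski sum of two constrained zonotopes:
`CZ(G_z,c_z,A_z,b_z) ⊕ CZ(G_w,c_w,A_w,b_w)
  = CZ([G_z G_w], c_z + c_w, blkdiag(A_z,A_w), (b_z,b_w))`. -/
theorem minkowski_sum_CZ {n ι₁ ι₂ κ₁ κ₂ : Type*} [Fintype ι₁] [Fintype ι₂]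
    (Gz : Matrix n ι₁ ℝ) (cz : n → ℝ) (Az : Matrix κ₁ ι₁ ℝ) (bz : κ₁ → ℝ)
    (Gw : Matrix n ι₂ ℝ) (cw : n → ℝ) (Aw : Matrix κ₂ ι₂ ℝ) (bw : κ₂ → ℝ) :
    {x | ∃ z ∈ CZ Gz cz Az bz, ∃ w ∈ CZ Gw cw Aw bw, x = z + w} =
      CZ (Matrix.fromCols Gz Gw) (cz + cw)
        (Matrix.fromBlocks Az 0 0 Aw) (Sum.elim bz bw) := by
  ext x
  constructor
  · rintro ⟨z, ⟨ξ₁, h₁, hA₁, rfl⟩, w, ⟨ξ₂, h₂, hA₂, rfl⟩, rfl⟩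
    refine ⟨Sum.elim ξ₁ ξ₂, ?_, ?_, ?_⟩
    · rw [pi_norm_le_iff_of_nonneg one_pos.le]
      rintro (i | i)
      · exact (norm_le_pi_norm ξ₁ i).trans h₁
      · exact (norm_le_pi_norm ξ₂ i).trans h₂
    · rw [fromBlocks_mulVec]
      simp [hA₁, hA₂]
    · rw [fromCols_mulVec_sumElim]
      abel
  · rintro ⟨ξ, hξ, hA, rfl⟩
    rw [pi_norm_le_iff_of_nonneg one_pos.le] at hξ
    rw [fromBlocks_mulVec] at hA
    refine ⟨cz + Gz.mulVec (ξ ∘ Sum.inl), ⟨ξ ∘ Sum.inl, ?_, ?_, rfl⟩,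
            cw + Gw.mulVec (ξ ∘ Sum.inr), ⟨ξ ∘ Sum.inr, ?_, ?_, rfl⟩, ?_⟩
    · exact pi_norm_le_iff_of_nonneg one_pos.le |>.2 fun i => hξ (Sum.inl i)
    · ext k
      simpa using congrFun hA (Sum.inl k)
    · exact pi_norm_le_iff_of_nonneg one_pos.le |>.2 fun i => hξ (Sum.inr i)
    · ext k
      simpa using congrFun hA (Sum.inr k)
    · have : Matrix.fromCols Gz Gw *ᵥ ξ =
        Gz *ᵥ (ξ ∘ Sum.inl) + Gw *ᵥ (ξ ∘ Sum.inr) := by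
        conv_lhs => rw [← Sum.elim_comp_inl_inr ξ]
        rw [fromCols_mulVec_sumElim]
      rw [this]; abel
end

section
/- (Prediction enclosure, Lemma 1.) Suppose z' ∈ CZ(Ĝ, ĉ, Â, b̂) ⊆ ℝ^n, w', w'' ∈ W = CZ(G_w, c_w, A_w, b_w) ⊆ ℝ^{n_w}, and z = (z̃, ž) ∈ ℝ^{n_z} × ℝ^{n−n_z} satisfies: (i) z̃ = Ã z' + B̃ u' + B̃_w w' (the decoupled dynamics with input u' ∈ ℝ^{n_u}); (ii) z ∈ Z_a = CZ(G_a, c_a, A_a, b_a), where G_a is split row-wise as (G̃_a; Ǧ_a) and c_a = (c̃_a, č_a) conformally with the splitting (z̃, ž); (iii) Ǎ z + B̌ u + B̌_w w'' = 0 for the current input u ∈ ℝ^{n_u}. Then z belongs to the constrained zonotope CZ(Ḡ, c̄, Ā, b̄) with: Ḡ the block matrix with first block row [Ã Ĝ, B̃_w G_w, 0, 0] and second block row [0, 0, Ǧ_a, 0]; c̄ = (Ã ĉ + B̃ u' + B̃_w c_w, č_a); Ā the block matrix consisting of blkdiag(Â, A_w, A_a, A_w) stacked above the row [Ǎ·(Ã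 Ĝ; 0), Ǎ·(B̃_w G_w; 0), Ǎ·(0; Ǧ_a), B̌_w G_w], where (M; 0) denotes the matrix M stacked above a zero block conformal to the splitting (z̃, ž); and b̄ = (b̂, b_w, b_a, b_w, −Ǎ·(Ã ĉ + B̃ u' + B̃_w c_w, č_a) − B̌ u − B̌_w c_w). -/
open Matrix

/-- Lemma 1 (prediction enclosure): if `z' ∈ CZ(Ĝ,ĉ,Â,b̂)`, `w', w'' ∈ W`,
`z = (z̃, ž)` satisfies the decoupled dynamics `z̃ = Ã z' + B̃ u' + B̃_w w'`,
`z ∈ Z_a = CZ(G_a,c_a,A_a,b_a)`, and the static constraint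
`Ǎ z + B̌ u + B̌_w w'' = 0`, then `z ∈ CZ(Ḡ, c̄, Ā, b̄)`. -/
theorem prediction_enclosure {ζ η μ ω ιh ιw ιa κh κw κa : Type*}
    [Fintype ζ] [Fintype η] [Fintype μ] [Fintype ω]
    [Fintype ιh] [Fintype ιw] [Fintype ιa]
    (At : Matrix ζ (ζ ⊕ η) ℝ) (Ac : Matrix η (ζ ⊕ η) ℝ)
    (Bt : Matrix ζ μ ℝ) (Bc : Matrix η μ ℝ)
    (Bwt : Matrix ζ ω ℝ) (Bwc : Matrix η ω ℝ)
    (Gh : Matrix (ζ ⊕ η) ιh ℝ) (ch : (ζ ⊕ η) → ℝ) (Ah : Matrix κh ιh ℝ) (bh : κh → ℝ)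
    (Gw : Matrix ω ιw ℝ) (cw : ω → ℝ) (Aw : Matrix κw ιw ℝ) (bw : κw → ℝ)
    (Ga : Matrix (ζ ⊕ η) ιa ℝ) (ca : (ζ ⊕ η) → ℝ) (Aa : Matrix κa ιa ℝ) (ba : κa → ℝ)
    (u' u : μ → ℝ)
    (z' z : (ζ ⊕ η) → ℝ) (w' w'' : ω → ℝ)
    (hz' : z' ∈ CZ Gh ch Ah bh)
    (hw' : w' ∈ CZ Gw cw Aw bw) (hw'' : w'' ∈ CZ Gw cw Aw bw)
    (hdyn : (fun i => z (Sum.inl i)) = At.mulVec z' + Bt.mulVec u' + Bwt.mulVec w')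
    (hza : z ∈ CZ Ga ca Aa ba)
    (hstat : Ac.mulVec z + Bc.mulVec u + Bwc.mulVec w'' = 0) :
    z ∈ CZ
      -- Ḡ : block rows [Ã Ĝ, B̃_w G_w, 0, 0] and [0, 0, Ǧ_a, 0]
      (Matrix.fromRows
        (Matrix.fromCols (At * Gh)
          (Matrix.fromCols (Bwt * Gw) (0 : Matrix ζ (ιa ⊕ ιw) ℝ)))
        (Matrix.fromCols (0 : Matrix η ιh ℝ)
          (Matrix.fromCols (0 : Matrix η ιw ℝ)
            (Matrix.fromCols (Ga.submatrix Sum.inr id) (0 : Matrix η ιw ℝ)))))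
      -- c̄ = (Ã ĉ + B̃ u' + B̃_w c_w, č_a)
      (Sum.elim (At.mulVec ch + Bt.mulVec u' + Bwt.mulVec cw) (fun i => ca (Sum.inr i)))
      -- Ā : blkdiag(Â, A_w, A_a, A_w) stacked above
      --     [Ǎ·(Ã Ĝ; 0), Ǎ·(B̃_w G_w; 0), Ǎ·(0; Ǧ_a), B̌_w G_w]
      (Matrix.fromRows
        (Matrix.fromBlocks Ah 0 0
          (Matrix.fromBlocks Aw 0 0
            (Matrix.fromBlocks Aa 0 0 Aw)))
        (Matrix.fromCols (Ac * Matrix.fromRows (At * Gh) (0 : Matrix η ιh ℝ))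
          (Matrix.fromCols (Ac * Matrix.fromRows (Bwt * Gw) (0 : Matrix η ιw ℝ))
            (Matrix.fromCols
              (Ac * Matrix.fromRows (0 : Matrix ζ ιa ℝ) (Ga.submatrix Sum.inr id))
              (Bwc * Gw)))))
      -- b̄ = (b̂, b_w, b_a, b_w, −Ǎ c̄ − B̌ u − B̌_w c_w)
      (Sum.elim (Sum.elim bh (Sum.elim bw (Sum.elim ba bw)))
        (-(Ac.mulVec (Sum.elim (At.mulVec ch + Bt.mulVec u' + Bwt.mulVec cw)
              (fun i => ca (Sum.inr i))))
          - Bc.mulVec u - Bwc.mulVec cw)) := by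
  obtain ⟨ξh, hξh, hAh, hzh⟩ := hz'
  obtain ⟨ξw1, hξw1, hAw1, hw1⟩ := hw'
  obtain ⟨ξw2, hξw2, hAw2, hw2⟩ := hw''
  obtain ⟨ξa, hξa, hAa, hza'⟩ := hza
  have hzeq : z = Sum.elim (At.mulVec ch + Bt.mulVec u' + Bwt.mulVec cw)
      (fun i => ca (Sum.inr i)) +
      (Matrix.fromRows
        (Matrix.fromCols (At * Gh)
          (Matrix.fromCols (Bwt * Gw) (0 : Matrix ζ (ιa ⊕ ιw) ℝ)))
        (Matrix.fromCols (0 : Matrix η ιh ℝ)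
          (Matrix.fromCols (0 : Matrix η ιw ℝ)
            (Matrix.fromCols (Ga.submatrix Sum.inr id) (0 : Matrix η ιw ℝ))))).mulVec
        (Sum.elim ξh (Sum.elim ξw1 (Sum.elim ξa ξw2))) := by
    funext i
    cases i with
    | inl i =>
      have := congrFun hdyn i
      simp only [Matrix.fromRows_mulVec, Matrix.fromCols_mulVec_sumElim] at *
      simp only [hzh, hw1, Matrix.mulVec_add, Matrix.mulVec_mulVec,
        Matrix.zero_mulVec] at this ⊢
      simp only [Pi.add_apply, Sum.elim_inl, Pi.zero_apply] at this ⊢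
      linarith
    | inr i =>
      have := congrFun hza' (Sum.inr i)
      simp only [Matrix.fromRows_mulVec, Matrix.fromCols_mulVec_sumElim,
        Matrix.zero_mulVec, Pi.add_apply, Sum.elim_inr, Pi.zero_apply,
        zero_add, add_zero] at this ⊢
      simpa [Matrix.mulVec, dotProduct] using this
  refine ⟨Sum.elim ξh (Sum.elim ξw1 (Sum.elim ξa ξw2)), ?_, ?_, ?_⟩
  · rw [pi_norm_le_iff_of_nonneg zero_le_one]
    rintro (i | (i | (i | i)))
    · exact le_trans (norm_le_pi_norm ξh i) hξh
    · exact le_trans (norm_le_pi_norm ξw1 i) hξw1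
    · exact le_trans (norm_le_pi_norm ξa i) hξa
    · exact le_trans (norm_le_pi_norm ξw2 i) hξw2
  · -- constraint equation
    funext k
    cases k with
    | inl k =>
      simp only [Matrix.fromRows_mulVec, Matrix.fromBlocks_mulVec, Sum.elim_inl,
        Matrix.zero_mulVec, add_zero, zero_add]
      rcases k with k | (k | (k | k)) <;>
        simp_all [Matrix.fromBlocks_mulVec]
    | inr k =>
      -- bottom row
      have hAz := congrFun hstat k
      have hzk := congrFun (congrArg Ac.mulVec hzeq) k
      simp only [Matrix.mulVec_add] at hzk
      simp only [Matrix.fromRows_mulVec, Matrix.fromCols_mulVec_sumElim,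
        Matrix.mulVec_mulVec, Matrix.zero_mulVec, hw2, Matrix.mulVec_add,
        Pi.add_apply, Pi.zero_apply, Pi.neg_apply, Pi.sub_apply, Sum.elim_inr,
        add_zero, zero_add] at hAz hzk ⊢
      have key : (Ac * Matrix.fromRows (At * Gh) (0 : Matrix η ιh ℝ)).mulVec ξh
          + (Ac * Matrix.fromRows (Bwt * Gw) (0 : Matrix η ιw ℝ)).mulVec ξw1
          + (Ac * Matrix.fromRows (0 : Matrix ζ ιa ℝ)
              (Ga.submatrix Sum.inr id)).mulVec ξa
          = Ac.mulVec (Sum.elim ((At * Gh).mulVec ξh + (Bwt * Gw).mulVec ξw1)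
              ((Ga.submatrix Sum.inr id).mulVec ξa)) := by
        simp only [← Matrix.mulVec_mulVec, Matrix.fromRows_mulVec, ← Matrix.mulVec_add]
        refine congrArg _ ?_
        funext j
        cases j <;> simp [Matrix.mulVec_mulVec]
      have keyk := congrFun key k
      simp only [Pi.add_apply] at keyk
      linarith
  · exact hzeq
end

section
/- (Initial-set constraint incorporation.) Suppose z₀ ∈ CZ(G₀, c₀, A₀, b₀) ⊆ ℝ^n and there exists w₀ ∈ W = CZ(G_w, c_w, A_w, b_w) ⊆ ℝ^{n_w} such that Ǎ z₀ + B̌ u₀ + B̌_w w₀ = 0, for a given input u₀ ∈ ℝ^{n_u}. Then z₀ belongs to the constrained zonotope with generator matrix [G₀ 0], center c₀, constraint matrix the block matrix with rows [A₀ 0] and [Ǎ G₀, B̌_w G_w], and constraint vector (b₀, −Ǎ c₀ − B̌_w c_w − B̌ u₀). -/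
open Matrix

/-- Initial-set constraint incorporation: if `z₀ ∈ CZ(G₀,c₀,A₀,b₀)` and there
is `w₀ ∈ W = CZ(G_w,c_w,A_w,b_w)` with `Ǎ z₀ + B̌ u₀ + B̌_w w₀ = 0`, then `z₀`
belongs to the constrained zonotope with generators `[G₀ 0]`, center `c₀`,
constraint matrix with rows `[A₀ 0]`, `[Ǎ G₀, B̌_w G_w]`, and constraint
vector `(b₀, −Ǎ c₀ − B̌_w c_w − B̌ u₀)`. -/
theorem initial_set_constraint {n η μ ω ι₀ ιw κ₀ κw : Type*}
    [Fintype n] [Fintype μ] [Fintype ω] [Fintype ι₀] [Fintype ιw]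
    (Ac : Matrix η n ℝ) (Bc : Matrix η μ ℝ) (Bwc : Matrix η ω ℝ)
    (G₀ : Matrix n ι₀ ℝ) (c₀ : n → ℝ) (A₀ : Matrix κ₀ ι₀ ℝ) (b₀ : κ₀ → ℝ)
    (Gw : Matrix ω ιw ℝ) (cw : ω → ℝ) (Aw : Matrix κw ιw ℝ) (bw : κw → ℝ)
    (u₀ : μ → ℝ) (z₀ : n → ℝ)
    (hz₀ : z₀ ∈ CZ G₀ c₀ A₀ b₀)
    (hw₀ : ∃ w₀ ∈ CZ Gw cw Aw bw,
      Ac.mulVec z₀ + Bc.mulVec u₀ + Bwc.mulVec w₀ = 0) :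
    z₀ ∈ CZ (Matrix.fromCols G₀ (0 : Matrix n ιw ℝ)) c₀
      (Matrix.fromBlocks A₀ 0 (Ac * G₀) (Bwc * Gw))
      (Sum.elim b₀ (-(Ac.mulVec c₀) - Bwc.mulVec cw - Bc.mulVec u₀)) := by
  obtain ⟨ξ₀, hξ₀, hA₀, hz⟩ := hz₀
  obtain ⟨w₀, ⟨ξw, hξw, hAw, hwdef⟩, heq⟩ := hw₀
  refine ⟨Sum.elim ξ₀ ξw, ?_, ?_, ?_⟩
  · rw [pi_norm_le_iff_of_nonneg one_pos.le]
    rintro (i | i)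
    · exact (norm_le_pi_norm ξ₀ i).trans hξ₀
    · exact (norm_le_pi_norm ξw i).trans hξw
  · rw [fromBlocks_mulVec]
    funext k
    cases k with
    | inl k => simp [hA₀]
    | inr k =>
      have h2 : Ac.mulVec (G₀.mulVec ξ₀) + Bwc.mulVec (Gw.mulVec ξw)
          = -(Ac.mulVec c₀) - Bwc.mulVec cw - Bc.mulVec u₀ := by
        rw [hz, hwdef, Matrix.mulVec_add, Matrix.mulVec_add] at heq
        funext j
        have := congrFun heq j
        simp only [Pi.add_apply, Pi.zero_apply, Pi.sub_apply, Pi.neg_apply] at this ⊢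
        linarith
      simp only [Sum.elim_inr, ← Matrix.mulVec_mulVec]
      have := congrFun h2 k
      simpa using this
  · rw [fromCols_mulVec_sumElim]
    simp [hz]
end

section
/- (Theorem 1: separating-input characterization.) For i = 1, 2, let the output reachable set be the constrained zonotope Y_i(u̲) = CZ(G_i, c_i + N_i u̲, A_i, b_i + Ω_i u̲), where the center and constraint vector depend affinely on the input sequence u̲ ∈ ℝ^p through fixed matrices N_i ∈ ℝ^{n_y×p} and Ω_i ∈ ℝ^{n_{c,i}×p}. Then Y₁(u̲) ∩ Y₂(u̲) = ∅ if and only if the stacked vector ((N₂ − N₁) u̲, Ω₁ u̲, Ω₂ u̲) does NOT belong to the zonotope {G ξ + d : ‖ξ‖_∞ ≤ 1}, where G is the stacked matrix with block rows [G₁ −G₂], [A₁ 0], [0 A₂] and d = (c₁ − c₂, −b₁, −b₂). -/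
open Matrix

lemma sum_elim_norm_le {ι₁ ι₂ : Type*} [Fintype ι₁] [Fintype ι₂] (ξ : ι₁ ⊕ ι₂ → ℝ) :
    ‖ξ‖ ≤ 1 ↔ ‖ξ ∘ Sum.inl‖ ≤ 1 ∧ ‖ξ ∘ Sum.inr‖ ≤ 1 := by
  simp only [pi_norm_le_iff_of_nonneg zero_le_one]
  constructor
  · exact fun h => ⟨fun i => h (Sum.inl i), fun i => h (Sum.inr i)⟩
  · rintro ⟨h1, h2⟩ (i | i)
    · exact h1 i
    · exact h2 i

theorem separating_input_iff' {ny π ι₁ ι₂ κ₁ κ₂ : Type*}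
    [Fintype π] [Fintype ι₁] [Fintype ι₂]
    (G₁ : Matrix ny ι₁ ℝ) (c₁ : ny → ℝ) (A₁ : Matrix κ₁ ι₁ ℝ) (b₁ : κ₁ → ℝ)
    (G₂ : Matrix ny ι₂ ℝ) (c₂ : ny → ℝ) (A₂ : Matrix κ₂ ι₂ ℝ) (b₂ : κ₂ → ℝ)
    (N₁ N₂ : Matrix ny π ℝ) (Ω₁ : Matrix κ₁ π ℝ) (Ω₂ : Matrix κ₂ π ℝ)
    (u : π → ℝ) :
    CZ G₁ (c₁ + N₁.mulVec u) A₁ (b₁ + Ω₁.mulVec u) ∩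
        CZ G₂ (c₂ + N₂.mulVec u) A₂ (b₂ + Ω₂.mulVec u) = ∅ ↔
      Sum.elim ((N₂ - N₁).mulVec u) (Sum.elim (Ω₁.mulVec u) (Ω₂.mulVec u)) ∉
        {x : ny ⊕ (κ₁ ⊕ κ₂) → ℝ | ∃ ξ : ι₁ ⊕ ι₂ → ℝ, ‖ξ‖ ≤ 1 ∧
          x = (Matrix.fromRows (Matrix.fromCols G₁ (-G₂))
                (Matrix.fromBlocks A₁ 0 0 A₂)).mulVec ξ +
              Sum.elim (c₁ - c₂) (Sum.elim (-b₁) (-b₂))} := by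
  rw [Set.eq_empty_iff_forall_notMem]
  rw [← not_exists]
  apply not_congr
  constructor
  · rintro ⟨x, ⟨ξ₁, h1, hA1, hx1⟩, ⟨ξ₂, h2, hA2, hx2⟩⟩
    refine ⟨Sum.elim ξ₁ ξ₂, ?_, ?_⟩
    · rw [sum_elim_norm_le]; simpa using ⟨h1, h2⟩
    · rw [Matrix.fromRows_mulVec, Matrix.fromCols_mulVec_sumElim,
        Matrix.fromBlocks_mulVec]
      funext i
      rcases i with i | (k | k)
      · have := congrFun hx1 i
        have h2' := congrFun hx2 i
        simp only [Pi.add_apply, Pi.sub_apply, Sum.elim_inl, Matrix.sub_mulVec,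
          Matrix.neg_mulVec, Pi.neg_apply] at *
        linarith [this, h2']
      · have := congrFun hA1 k
        simp only [Pi.add_apply, Sum.elim_inr, Sum.elim_inl, Matrix.zero_mulVec,
          Pi.zero_apply, Pi.neg_apply, Sum.elim_comp_inl, Sum.elim_comp_inr] at *
        linarith
      · have := congrFun hA2 k
        simp only [Pi.add_apply, Sum.elim_inr, Matrix.zero_mulVec,
          Pi.zero_apply, Pi.neg_apply, Sum.elim_comp_inl, Sum.elim_comp_inr] at *
        linarith
  · rintro ⟨ξ, hξ, hx⟩
    rw [sum_elim_norm_le] at hξ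
    rw [show ξ = Sum.elim (ξ ∘ Sum.inl) (ξ ∘ Sum.inr) from (Sum.elim_comp_inl_inr ξ).symm,
      Matrix.fromRows_mulVec, Matrix.fromCols_mulVec_sumElim,
      Matrix.fromBlocks_mulVec] at hx
    refine ⟨c₁ + N₁.mulVec u + G₁.mulVec (ξ ∘ Sum.inl),
      ⟨ξ ∘ Sum.inl, hξ.1, ?_, rfl⟩, ⟨ξ ∘ Sum.inr, hξ.2, ?_, ?_⟩⟩
    · funext k
      have := congrFun hx (Sum.inr (Sum.inl k))
      simp only [Pi.add_apply, Sum.elim_inr, Sum.elim_inl, Matrix.zero_mulVec,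
        Pi.zero_apply, Pi.neg_apply, Sum.elim_comp_inl, Sum.elim_comp_inr] at this ⊢
      linarith
    · funext k
      have := congrFun hx (Sum.inr (Sum.inr k))
      simp only [Pi.add_apply, Sum.elim_inr, Matrix.zero_mulVec,
        Pi.zero_apply, Pi.neg_apply, Sum.elim_comp_inl, Sum.elim_comp_inr] at this ⊢
      linarith
    · funext i
      have := congrFun hx (Sum.inl i)
      simp only [Pi.add_apply, Pi.sub_apply, Sum.elim_inl, Matrix.sub_mulVec,
        Matrix.neg_mulVec, Pi.neg_apply] at this ⊢
      linarith

/-- Theorem 1 (separating-input characterization): for output reachable sets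
`Y_i(u̲) = CZ(G_i, c_i + N_i u̲, A_i, b_i + Ω_i u̲)`, `i = 1, 2`, we have
`Y₁(u̲) ∩ Y₂(u̲) = ∅` iff the stacked vector `((N₂ − N₁)u̲, Ω₁u̲, Ω₂u̲)` does
not belong to the zonotope `{Gξ + d : ‖ξ‖_∞ ≤ 1}` with `G` having block rows
`[G₁ −G₂]`, `[A₁ 0]`, `[0 A₂]` and `d = (c₁ − c₂, −b₁, −b₂)`. -/
theorem separating_input_iff {ny π ι₁ ι₂ κ₁ κ₂ : Type*}
    [Fintype π] [Fintype ι₁] [Fintype ι₂]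
    (G₁ : Matrix ny ι₁ ℝ) (c₁ : ny → ℝ) (A₁ : Matrix κ₁ ι₁ ℝ) (b₁ : κ₁ → ℝ)
    (G₂ : Matrix ny ι₂ ℝ) (c₂ : ny → ℝ) (A₂ : Matrix κ₂ ι₂ ℝ) (b₂ : κ₂ → ℝ)
    (N₁ N₂ : Matrix ny π ℝ) (Ω₁ : Matrix κ₁ π ℝ) (Ω₂ : Matrix κ₂ π ℝ)
    (u : π → ℝ) :
    CZ G₁ (c₁ + N₁.mulVec u) A₁ (b₁ + Ω₁.mulVec u) ∩
        CZ G₂ (c₂ + N₂.mulVec u) A₂ (b₂ + Ω₂.mulVec u) = ∅ ↔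
      Sum.elim ((N₂ - N₁).mulVec u) (Sum.elim (Ω₁.mulVec u) (Ω₂.mulVec u)) ∉
        {x : ny ⊕ (κ₁ ⊕ κ₂) → ℝ | ∃ ξ : ι₁ ⊕ ι₂ → ℝ, ‖ξ‖ ≤ 1 ∧
          x = (Matrix.fromRows (Matrix.fromCols G₁ (-G₂))
                (Matrix.fromBlocks A₁ 0 0 A₂)).mulVec ξ +
              Sum.elim (c₁ - c₂) (Sum.elim (-b₁) (-b₂))} := by
  exact separating_input_iff' G₁ c₁ A₁ b₁ G₂ c₂ A₂ b₂ N₁ N₂ Ω₁ Ω₂ u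
end

section
/- (One-step prediction–update correctness.) Suppose, in addition to the hypotheses of the prediction enclosure (z' ∈ Ẑ = CZ(Ĝ, ĉ, Â, b̂), w', w'' ∈ W = CZ(G_w, c_w, A_w, b_w), z = (z̃, ž) with z̃ = Ã z' + B̃ u' + B̃_w w', z ∈ Z_a = CZ(G_a, c_a, A_a, b_a), and Ǎ z + B̌ u + B̌_w w'' = 0), the measurement equation holds: y = C T z + D u + D_v v for some v ∈ V = CZ(G_v, c_v, A_v, b_v), where C ∈ ℝ^{n_y×n}, T ∈ ℝ^{n×n}, D ∈ ℝ^{n_y×n_u}, D_v ∈ ℝ^{n_y×n_v}. Then z ∈ Ẑ⁺ = Z̄ ∩_{CT} ({y − D u} ⊕ (−D_v)V) and T z ∈ T Ẑ⁺, where Z̄ = CZ(Ḡ, c̄, Ā, b̄) is the prediction constrained zonotope of Lemma 1, ∩_{CT} denotes generalized intersection with respect to the matrix CT, and ⊕ denotes Minkowski sum. -/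
open Matrix

/-- One-step prediction–update correctness: under the hypotheses of the
prediction enclosure (Lemma 1) together with the measurement equation
`y = C T z + D u + D_v v`, `v ∈ V`, the state satisfies
`z ∈ Ẑ⁺ = Z̄ ∩_{CT} ({y − Du} ⊕ (−D_v)V)` and `T z ∈ T Ẑ⁺`. -/
theorem prediction_update_correct {ζ η μ ω ny nu' nv ιh ιw ιa ιv κh κw κa κv : Type*}
    [Fintype ζ] [Fintype η] [Fintype μ] [Fintype ω] [Fintype nv]
    [Fintype ιh] [Fintype ιw] [Fintype ιa] [Fintype ιv]
    (At : Matrix ζ (ζ ⊕ η) ℝ) (Ac : Matrix η (ζ ⊕ η) ℝ)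
    (Bt : Matrix ζ μ ℝ) (Bc : Matrix η μ ℝ)
    (Bwt : Matrix ζ ω ℝ) (Bwc : Matrix η ω ℝ)
    (Gh : Matrix (ζ ⊕ η) ιh ℝ) (ch : (ζ ⊕ η) → ℝ) (Ah : Matrix κh ιh ℝ) (bh : κh → ℝ)
    (Gw : Matrix ω ιw ℝ) (cw : ω → ℝ) (Aw : Matrix κw ιw ℝ) (bw : κw → ℝ)
    (Ga : Matrix (ζ ⊕ η) ιa ℝ) (ca : (ζ ⊕ η) → ℝ) (Aa : Matrix κa ιa ℝ) (ba : κa → ℝ)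
    (Gv : Matrix nv ιv ℝ) (cv : nv → ℝ) (Av : Matrix κv ιv ℝ) (bv : κv → ℝ)
    (C : Matrix ny (ζ ⊕ η) ℝ) (T : Matrix (ζ ⊕ η) (ζ ⊕ η) ℝ)
    (D : Matrix ny μ ℝ) (Dv : Matrix ny nv ℝ)
    (u' u : μ → ℝ) (y : ny → ℝ)
    (z' z : (ζ ⊕ η) → ℝ) (w' w'' : ω → ℝ)
    (hz' : z' ∈ CZ Gh ch Ah bh)
    (hw' : w' ∈ CZ Gw cw Aw bw) (hw'' : w'' ∈ CZ Gw cw Aw bw)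
    (hdyn : (fun i => z (Sum.inl i)) = At.mulVec z' + Bt.mulVec u' + Bwt.mulVec w')
    (hza : z ∈ CZ Ga ca Aa ba)
    (hstat : Ac.mulVec z + Bc.mulVec u + Bwc.mulVec w'' = 0)
    (hmeas : ∃ v ∈ CZ Gv cv Av bv,
      y = (C * T).mulVec z + D.mulVec u + Dv.mulVec v) :
    -- the prediction constrained zonotope Z̄ = CZ(Ḡ, c̄, Ā, b̄) of Lemma 1
    let Zbar : Set ((ζ ⊕ η) → ℝ) := CZ
      (Matrix.fromRows
        (Matrix.fromCols (At * Gh)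
          (Matrix.fromCols (Bwt * Gw) (0 : Matrix ζ (ιa ⊕ ιw) ℝ)))
        (Matrix.fromCols (0 : Matrix η ιh ℝ)
          (Matrix.fromCols (0 : Matrix η ιw ℝ)
            (Matrix.fromCols (Ga.submatrix Sum.inr id) (0 : Matrix η ιw ℝ)))))
      (Sum.elim (At.mulVec ch + Bt.mulVec u' + Bwt.mulVec cw) (fun i => ca (Sum.inr i)))
      (Matrix.fromRows
        (Matrix.fromBlocks Ah 0 0
          (Matrix.fromBlocks Aw 0 0
            (Matrix.fromBlocks Aa 0 0 Aw)))
        (Matrix.fromCols (Ac * Matrix.fromRows (At * Gh) (0 : Matrix η ιh ℝ))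
          (Matrix.fromCols (Ac * Matrix.fromRows (Bwt * Gw) (0 : Matrix η ιw ℝ))
            (Matrix.fromCols
              (Ac * Matrix.fromRows (0 : Matrix ζ ιa ℝ) (Ga.submatrix Sum.inr id))
              (Bwc * Gw)))))
      (Sum.elim (Sum.elim bh (Sum.elim bw (Sum.elim ba bw)))
        (-(Ac.mulVec (Sum.elim (At.mulVec ch + Bt.mulVec u' + Bwt.mulVec cw)
              (fun i => ca (Sum.inr i))))
          - Bc.mulVec u - Bwc.mulVec cw));
    -- the updated set Ẑ⁺ = Z̄ ∩_{CT} ({y − Du} ⊕ (−D_v)V)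
    let Zplus : Set ((ζ ⊕ η) → ℝ) :=
      {x ∈ Zbar | (C * T).mulVec x ∈
        {p : ny → ℝ | ∃ q ∈ (fun v => -(Dv.mulVec v)) '' CZ Gv cv Av bv,
          p = (y - D.mulVec u) + q}};
    z ∈ Zplus ∧ T.mulVec z ∈ (fun x => T.mulVec x) '' Zplus := by

  intro Zbar Zplus
  obtain ⟨ξh, hξh, hAh, hzh⟩ := hz'
  obtain ⟨ξw1, hξw1, hAw1, hw1⟩ := hw'
  obtain ⟨ξw2, hξw2, hAw2, hw2⟩ := hw''
  obtain ⟨ξa, hξa, hAa, hza'⟩ := hza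
  obtain ⟨v, hv, hy⟩ := hmeas
  set cbar : (ζ ⊕ η) → ℝ :=
    Sum.elim (At.mulVec ch + Bt.mulVec u' + Bwt.mulVec cw) (fun i => ca (Sum.inr i)) with hcbar
  have hGa : ∀ i, (Ga.submatrix Sum.inr id).mulVec ξa i = Ga.mulVec ξa (Sum.inr i) :=
    fun i => rfl
  have hzeq : z = cbar + Sum.elim ((At * Gh).mulVec ξh + (Bwt * Gw).mulVec ξw1)
      ((Ga.submatrix Sum.inr id).mulVec ξa) := by
    funext i
    cases i with
    | inl i =>
      have hd := congrFun hdyn i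
      rw [hzh, hw1] at hd
      simp only [Matrix.mulVec_add, Matrix.mulVec_mulVec, Pi.add_apply] at hd
      simp only [hcbar, Pi.add_apply, Sum.elim_inl]
      linarith [hd]
    | inr i =>
      have hd := congrFun hza' (Sum.inr i)
      simp only [Pi.add_apply] at hd
      simp [hcbar, hGa, hd]
  have hsum : Sum.elim ((At * Gh).mulVec ξh) 0 + Sum.elim ((Bwt * Gw).mulVec ξw1) 0
      + Sum.elim (0 : ζ → ℝ) ((Ga.submatrix Sum.inr id).mulVec ξa) = z - cbar := by
    rw [hzeq]
    funext i
    cases i <;> simp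
  have hAcz : Ac.mulVec z = -(Bc.mulVec u) - Bwc.mulVec cw - Bwc.mulVec (Gw.mulVec ξw2) := by
    funext i
    have hs := congrFun hstat i
    rw [hw2] at hs
    simp only [Matrix.mulVec_add, Pi.add_apply, Pi.zero_apply] at hs
    simp only [Pi.sub_apply, Pi.neg_apply]
    linarith
  have hbot : Ac.mulVec (Sum.elim ((At * Gh).mulVec ξh) 0)
      + Ac.mulVec (Sum.elim ((Bwt * Gw).mulVec ξw1) 0)
      + Ac.mulVec (Sum.elim (0 : ζ → ℝ) ((Ga.submatrix Sum.inr id).mulVec ξa))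
      + Bwc.mulVec (Gw.mulVec ξw2)
      = -(Ac.mulVec cbar) - Bc.mulVec u - Bwc.mulVec cw := by
    rw [← Matrix.mulVec_add, ← Matrix.mulVec_add, hsum, Matrix.mulVec_sub, hAcz]
    abel
  have hzZbar : z ∈ Zbar := by
    refine ⟨Sum.elim ξh (Sum.elim ξw1 (Sum.elim ξa ξw2)), ?_, ?_, ?_⟩
    · rw [pi_norm_le_iff_of_nonneg zero_le_one]
      rintro (i | i | i | i)
      · exact le_trans (by simpa using norm_le_pi_norm ξh i) hξh
      · exact le_trans (by simpa using norm_le_pi_norm ξw1 i) hξw1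
      · exact le_trans (by simpa using norm_le_pi_norm ξa i) hξa
      · exact le_trans (by simpa using norm_le_pi_norm ξw2 i) hξw2
    · simp only [Matrix.fromRows_mulVec, Matrix.fromBlocks_mulVec, Sum.elim_comp_inl,
        Sum.elim_comp_inr, Matrix.fromCols_mulVec_sumElim, Matrix.zero_mulVec,
        add_zero, zero_add, ← Matrix.mulVec_mulVec, hAh, hAw1, hAa, hAw2]
      rw [← hbot]
      simp only [Matrix.mulVec_mulVec]
      abel
    · rw [hzeq]
      simp only [Matrix.fromRows_mulVec, Matrix.fromCols_mulVec_sumElim,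
        Matrix.zero_mulVec, add_zero, zero_add]
      rfl
  have hmeaseq : (C * T).mulVec z = (y - D.mulVec u) + (-(Dv.mulVec v)) := by
    rw [hy]; abel
  have hzp : z ∈ Zplus := ⟨hzZbar, ⟨-(Dv.mulVec v), ⟨v, hv, rfl⟩, hmeaseq⟩⟩
  exact ⟨hzp, ⟨z, hzp, rfl⟩⟩
end

section
/- (Exactness of the predicted set, Remark 3.) The prediction constrained zonotope Z̄ = CZ(Ḡ, c̄, Ā, b̄) of Lemma 1 equals exactly the feasible predicted state set: Z̄ = { (Ã z' + B̃ u' + B̃_w w', č_a + Ǧ_a ξ_a) : z' ∈ Ẑ, w' ∈ W, ξ_a ∈ ℝ^{n_{g,a}} with ‖ξ_a‖_∞ ≤ 1 and A_a ξ_a = b_a, and there exists w'' ∈ W such that Ǎ·(Ã z' + B̃ u' + B̃_w w', č_a + Ǧ_a ξ_a) + B̌ u + B̌_w w'' = 0 }, where Ẑ = CZ(Ĝ, ĉ, Â, b̂) and W = CZ(G_w, c_w, A_w, b_w). -/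
open Matrix

lemma elim_norm_le_one {α β : Type*} [Fintype α] [Fintype β] {f : α → ℝ} {g : β → ℝ} :
    ‖Sum.elim f g‖ ≤ 1 ↔ ‖f‖ ≤ 1 ∧ ‖g‖ ≤ 1 := by
  simp [pi_norm_le_iff_of_nonneg (zero_le_one : (0:ℝ) ≤ 1), Sum.forall]

lemma elim_eq_elim {α β γ : Type*} {f f' : α → γ} {g g' : β → γ} :
    Sum.elim f g = Sum.elim f' g' ↔ f = f' ∧ g = g' := by
  constructor
  · intro h
    exact ⟨funext fun a => congrFun h (.inl a), funext fun b => congrFun h (.inr b)⟩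
  · rintro ⟨rfl, rfl⟩; rfl

/-- Exactness of the predicted set (Remark 3): the prediction constrained
zonotope `Z̄ = CZ(Ḡ, c̄, Ā, b̄)` of Lemma 1 equals exactly the feasible
predicted state set
`{(Ã z' + B̃ u' + B̃_w w', č_a + Ǧ_a ξ_a) : z' ∈ Ẑ, w' ∈ W, ‖ξ_a‖_∞ ≤ 1,
  A_a ξ_a = b_a, ∃ w'' ∈ W, Ǎ·(…) + B̌ u + B̌_w w'' = 0}`. -/
theorem prediction_set_exact {ζ η μ ω ιh ιw ιa κh κw κa : Type*}
    [Fintype ζ] [Fintype η] [Fintype μ] [Fintype ω]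
    [Fintype ιh] [Fintype ιw] [Fintype ιa]
    (At : Matrix ζ (ζ ⊕ η) ℝ) (Ac : Matrix η (ζ ⊕ η) ℝ)
    (Bt : Matrix ζ μ ℝ) (Bc : Matrix η μ ℝ)
    (Bwt : Matrix ζ ω ℝ) (Bwc : Matrix η ω ℝ)
    (Gh : Matrix (ζ ⊕ η) ιh ℝ) (ch : (ζ ⊕ η) → ℝ) (Ah : Matrix κh ιh ℝ) (bh : κh → ℝ)
    (Gw : Matrix ω ιw ℝ) (cw : ω → ℝ) (Aw : Matrix κw ιw ℝ) (bw : κw → ℝ)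
    (Ga' : Matrix η ιa ℝ) (ca' : η → ℝ) (Aa : Matrix κa ιa ℝ) (ba : κa → ℝ)
    (u' u : μ → ℝ) :
    CZ
      (Matrix.fromRows
        (Matrix.fromCols (At * Gh)
          (Matrix.fromCols (Bwt * Gw) (0 : Matrix ζ (ιa ⊕ ιw) ℝ)))
        (Matrix.fromCols (0 : Matrix η ιh ℝ)
          (Matrix.fromCols (0 : Matrix η ιw ℝ)
            (Matrix.fromCols Ga' (0 : Matrix η ιw ℝ)))))
      (Sum.elim (At.mulVec ch + Bt.mulVec u' + Bwt.mulVec cw) ca')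
      (Matrix.fromRows
        (Matrix.fromBlocks Ah 0 0
          (Matrix.fromBlocks Aw 0 0
            (Matrix.fromBlocks Aa 0 0 Aw)))
        (Matrix.fromCols (Ac * Matrix.fromRows (At * Gh) (0 : Matrix η ιh ℝ))
          (Matrix.fromCols (Ac * Matrix.fromRows (Bwt * Gw) (0 : Matrix η ιw ℝ))
            (Matrix.fromCols
              (Ac * Matrix.fromRows (0 : Matrix ζ ιa ℝ) Ga')
              (Bwc * Gw)))))
      (Sum.elim (Sum.elim bh (Sum.elim bw (Sum.elim ba bw)))
        (-(Ac.mulVec (Sum.elim (At.mulVec ch + Bt.mulVec u' + Bwt.mulVec cw) ca'))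
          - Bc.mulVec u - Bwc.mulVec cw)) =
    {x : (ζ ⊕ η) → ℝ | ∃ z' ∈ CZ Gh ch Ah bh, ∃ w' ∈ CZ Gw cw Aw bw,
      ∃ ξa : ιa → ℝ, ‖ξa‖ ≤ 1 ∧ Aa.mulVec ξa = ba ∧
        x = Sum.elim (At.mulVec z' + Bt.mulVec u' + Bwt.mulVec w')
              (ca' + Ga'.mulVec ξa) ∧
        ∃ w'' ∈ CZ Gw cw Aw bw,
          Ac.mulVec x + Bc.mulVec u + Bwc.mulVec w'' = 0} := by
  ext x
  simp only [CZ, Set.mem_setOf_eq]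
  constructor
  · rintro ⟨ξ, hn, hA, rfl⟩
    have hξ : ξ = Sum.elim (ξ ∘ Sum.inl)
        (Sum.elim (ξ ∘ Sum.inr ∘ Sum.inl)
          (Sum.elim (ξ ∘ Sum.inr ∘ Sum.inr ∘ Sum.inl)
            (ξ ∘ Sum.inr ∘ Sum.inr ∘ Sum.inr))) := by
      funext i; rcases i with i | i | i | i <;> rfl
    set ξh := ξ ∘ Sum.inl
    set ξw := ξ ∘ Sum.inr ∘ Sum.inl
    set ξa := ξ ∘ Sum.inr ∘ Sum.inr ∘ Sum.inl
    set ξv := ξ ∘ Sum.inr ∘ Sum.inr ∘ Sum.inr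
    rw [hξ] at hn hA
    rw [hξ]
    simp only [elim_norm_le_one] at hn
    obtain ⟨hnh, hnw, hna, hnv⟩ : ‖ξh‖ ≤ 1 ∧ ‖ξw‖ ≤ 1 ∧ ‖ξa‖ ≤ 1 ∧ ‖ξv‖ ≤ 1 := by
      tauto
    simp only [fromRows_mulVec, fromCols_mulVec_sumElim, fromBlocks_mulVec,
      Sum.elim_comp_inl, Sum.elim_comp_inr, mulVec_zero, zero_mulVec, add_zero, zero_add,
      elim_eq_elim, ← mulVec_mulVec] at hA
    obtain ⟨⟨hAh, hAw, hAa, hAv⟩, hbot⟩ := hA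
    refine ⟨ch + Gh.mulVec ξh, ⟨ξh, hnh, hAh, rfl⟩,
      cw + Gw.mulVec ξw, ⟨ξw, hnw, hAw, rfl⟩, ξa, hna, hAa, ?_, ?_⟩
    · simp only [fromRows_mulVec, fromCols_mulVec_sumElim, mulVec_zero, zero_mulVec,
        add_zero, zero_add, ← mulVec_mulVec]
      funext i; cases i <;> simp [Matrix.mulVec_add] <;> ring
    · refine ⟨cw + Gw.mulVec ξv, ⟨ξv, hnv, hAv, rfl⟩, ?_⟩
      simp only [fromRows_mulVec, fromCols_mulVec_sumElim, mulVec_zero, zero_mulVec,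
        add_zero, zero_add, ← mulVec_mulVec]
      have key : (Sum.elim (At.mulVec (Gh.mulVec ξh) + Bwt.mulVec (Gw.mulVec ξw))
            (Ga'.mulVec ξa) : (ζ ⊕ η) → ℝ)
          = Sum.elim (At.mulVec (Gh.mulVec ξh)) (0 : η → ℝ)
            + Sum.elim (Bwt.mulVec (Gw.mulVec ξw)) (0 : η → ℝ)
            + Sum.elim (0 : ζ → ℝ) (Ga'.mulVec ξa) := by
        funext i; cases i <;> simp
      rw [Matrix.mulVec_add, key]
      simp only [Matrix.mulVec_add]
      linear_combination hbot
  · rintro ⟨z', ⟨ξh, hnh, hAh, rfl⟩, w', ⟨ξw, hnw, hAw, rfl⟩, ξa, hna, hAa, rfl,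
      w'', ⟨ξv, hnv, hAv, rfl⟩, hcon⟩
    refine ⟨Sum.elim ξh (Sum.elim ξw (Sum.elim ξa ξv)), ?_, ?_, ?_⟩
    · simp only [elim_norm_le_one]; exact ⟨hnh, hnw, hna, hnv⟩
    · simp only [fromRows_mulVec, fromCols_mulVec_sumElim, fromBlocks_mulVec,
        Sum.elim_comp_inl, Sum.elim_comp_inr, mulVec_zero, zero_mulVec, add_zero, zero_add,
        elim_eq_elim, ← mulVec_mulVec]
      refine ⟨⟨hAh, hAw, hAa, hAv⟩, ?_⟩
      have key : (Sum.elim (At.mulVec (ch + Gh.mulVec ξh) + Bt.mulVec u'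
            + Bwt.mulVec (cw + Gw.mulVec ξw)) (ca' + Ga'.mulVec ξa) : (ζ ⊕ η) → ℝ)
          = Sum.elim (At.mulVec ch + Bt.mulVec u' + Bwt.mulVec cw) ca'
            + Sum.elim (At.mulVec (Gh.mulVec ξh)) (0 : η → ℝ)
            + Sum.elim (Bwt.mulVec (Gw.mulVec ξw)) (0 : η → ℝ)
            + Sum.elim (0 : ζ → ℝ) (Ga'.mulVec ξa) := by
        funext i; cases i <;> simp [Matrix.mulVec_add] <;> ring
      rw [key] at hcon
      simp only [Matrix.mulVec_add] at hcon
      linear_combination hcon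
    · simp only [fromRows_mulVec, fromCols_mulVec_sumElim, mulVec_zero, zero_mulVec,
        add_zero, zero_add, ← mulVec_mulVec]
      funext i; cases i <;> simp [Matrix.mulVec_add] <;> ring
end
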